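/- Let δ, γ ∈ (−1, +∞) and let h₁, h₂ : [0,∞) → ℝ be continuous with 0 ≤ hᵢ(x) ≤ 1 for all x ≥ 0 (i = 1, 2). Then ‖T(h₁) − T(h₂)‖∞ ≤ M(δ,γ)·‖h₁ − h₂‖∞, where ‖·‖∞ denotes the supremum norm over [0,∞). In particular, if M(δ,γ) < 1, the map T is a contraction on the set of continuous functions h : [0,∞) → ℝ with 0 ≤ h ≤ 1. -/

import Mathlib

/-!
For `t ∈ [0,1]` the numbers `1 + δt`, `1 + γt` lie between `min(1, 1+δ)` and `max(1, 1+δ)`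
(resp. `γ`), so the exponent `A(w; h) = ∫₀ʷ 2z(1+γh)/(1+δh)` is squeezed between `αw²` and
`βw²`, with `α = min(1,1+γ)/max(1,1+δ)`, `β = max(1,1+γ)/min(1,1+δ)`, and it depends on `h` with
`|A(w; h₁) - A(w; h₂)| ≤ |δ-γ| ε w² / min(1,1+δ)²`, where `ε = ‖h₁ - h₂‖∞`. Hence the integrands
of `F(·; h₁)` and `F(·; h₂)` differ by `ε (c₀ + c₂ w²) e^{-αw²}`, and the Gaussian moments give
`|F(x; h₁) - F(x; h₂)| ≤ ε K` uniformly in `x`, so also at `x = +∞`. On the other hand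
`F(+∞; h) ≥ ℓ := √(π/β) / (2 max(1,1+δ))`. Writing
`F₁/L₁ - F₂/L₂ = (F₁ - F₂)/L₁ + (F₂/L₂)(L₂ - L₁)/L₁` with `0 ≤ F₂ ≤ L₂` bounds the left side by
`2εK/ℓ`, and `2K/ℓ` is exactly `M(δ,γ)`.
-/

open Real Filter Set

/-- `F(x; h)` from the paper. -/
noncomputable def Fint (δ γ : ℝ) (h : ℝ → ℝ) (x : ℝ) : ℝ :=
  ∫ w in (0:ℝ)..x,
    Real.exp (-(∫ z in (0:ℝ)..w, 2*z*(1+γ*h z)/(1+δ*h z))) * (1/(1+δ*h w))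

/-- The constant `M(δ,γ)` from the paper. -/
noncomputable def Mconst (δ γ : ℝ) : ℝ :=
  ((max 1 (1+δ)) ^ ((3:ℝ)/2) * (max 1 (1+γ)) ^ ((1:ℝ)/2) /
    ((min 1 (1+δ)) ^ ((5:ℝ)/2) * (min 1 (1+γ)) ^ ((1:ℝ)/2))) *
  (2*|δ| + |δ-γ| * (max 1 (1+δ)) / ((min 1 (1+δ)) * (min 1 (1+γ))))

open MeasureTheory intervalIntegral

lemma one_add_mul_mem_Icc (δ : ℝ) {t : ℝ} (ht : t ∈ Icc (0:ℝ) 1) :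
    1 + δ * t ∈ Icc (min 1 (1 + δ)) (max 1 (1 + δ)) := by
  obtain ⟨ht0, ht1⟩ := ht
  rcases le_total 0 δ with hδ | hδ
  · exact ⟨(min_le_left _ _).trans (by nlinarith), (le_max_right _ _).trans' (by nlinarith)⟩
  · exact ⟨(min_le_right _ _).trans (by nlinarith), (le_max_left _ _).trans' (by nlinarith)⟩

lemma min_one_one_add_pos {δ : ℝ} (hδ : -1 < δ) : 0 < min 1 (1 + δ) :=
  lt_min one_pos (by linarith)

lemma one_add_mul_pos {δ t : ℝ} (hδ : -1 < δ) (ht : t ∈ Icc (0:ℝ) 1) : 0 < 1 + δ * t :=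
  (min_one_one_add_pos hδ).trans_le (one_add_mul_mem_Icc δ ht).1

noncomputable def weight (δ γ t : ℝ) : ℝ := (1 + γ * t) / (1 + δ * t)

lemma weight_mem_Icc {δ γ t : ℝ} (hδ : -1 < δ) (hγ : -1 < γ) (ht : t ∈ Icc (0:ℝ) 1) :
    weight δ γ t ∈ Icc (min 1 (1 + γ) / max 1 (1 + δ)) (max 1 (1 + γ) / min 1 (1 + δ)) := by
  obtain ⟨hγ₁, hγ₂⟩ := one_add_mul_mem_Icc γ ht
  obtain ⟨hδ₁, hδ₂⟩ := one_add_mul_mem_Icc δ ht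
  have hm := min_one_one_add_pos hδ
  exact ⟨div_le_div₀ ((min_one_one_add_pos hγ).le.trans hγ₁) hγ₁ (hm.trans_le hδ₁) hδ₂,
    div_le_div₀ (lt_max_of_lt_left one_pos).le hγ₂ hm hδ₁⟩

lemma min_one_one_add_sq_le {δ u v : ℝ} (hδ : -1 < δ) (hu : u ∈ Icc (0:ℝ) 1)
    (hv : v ∈ Icc (0:ℝ) 1) : min 1 (1 + δ) ^ 2 ≤ (1 + δ * u) * (1 + δ * v) := by
  rw [sq]
  exact mul_le_mul (one_add_mul_mem_Icc δ hu).1 (one_add_mul_mem_Icc δ hv).1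
    (min_one_one_add_pos hδ).le (one_add_mul_pos hδ hu).le

lemma abs_one_div_one_add_mul_sub_le {δ u v : ℝ} (hδ : -1 < δ) (hu : u ∈ Icc (0:ℝ) 1)
    (hv : v ∈ Icc (0:ℝ) 1) :
    |1 / (1 + δ * u) - 1 / (1 + δ * v)| ≤ |δ| * |u - v| / min 1 (1 + δ) ^ 2 := by
  have hu' := one_add_mul_pos hδ hu
  have hv' := one_add_mul_pos hδ hv
  rw [div_sub_div _ _ hu'.ne' hv'.ne', abs_div, abs_of_pos (mul_pos hu' hv'),
    show 1 * (1 + δ * v) - (1 + δ * u) * 1 = δ * (v - u) by ring, abs_mul, abs_sub_comm v]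
  exact div_le_div_of_nonneg_left (by positivity)
    (pow_pos (min_one_one_add_pos hδ) 2) (min_one_one_add_sq_le hδ hu hv)

lemma abs_weight_sub_le {δ γ u v : ℝ} (hδ : -1 < δ) (hu : u ∈ Icc (0:ℝ) 1)
    (hv : v ∈ Icc (0:ℝ) 1) :
    |weight δ γ u - weight δ γ v| ≤ |δ - γ| * |u - v| / min 1 (1 + δ) ^ 2 := by
  have hu' := one_add_mul_pos hδ hu
  have hv' := one_add_mul_pos hδ hv
  rw [weight, weight, div_sub_div _ _ hu'.ne' hv'.ne', abs_div, abs_of_pos (mul_pos hu' hv'),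
    show (1 + γ * u) * (1 + δ * v) - (1 + δ * u) * (1 + γ * v) = (δ - γ) * (v - u) by ring,
    abs_mul, abs_sub_comm v]
  exact div_le_div_of_nonneg_left (by positivity)
    (pow_pos (min_one_one_add_pos hδ) 2) (min_one_one_add_sq_le hδ hu hv)

lemma abs_exp_neg_sub_exp_neg_le {a b c : ℝ} (ha : c ≤ a) (hb : c ≤ b) :
    |exp (-a) - exp (-b)| ≤ exp (-c) * |a - b| := by
  wlog hab : a ≤ b generalizing a b
  · rw [abs_sub_comm, abs_sub_comm a]
    exact this hb ha (le_of_not_ge hab)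
  have hexp : exp (-b) ≤ exp (-a) := exp_le_exp.2 (neg_le_neg hab)
  rw [abs_of_nonneg (sub_nonneg.2 hexp), abs_of_nonpos (sub_nonpos.2 hab)]
  calc exp (-a) - exp (-b) = exp (-a) * (1 - exp (-(b - a))) := by
        rw [mul_sub, ← exp_add]; ring_nf
    _ ≤ exp (-a) * (b - a) := by
        have := add_one_le_exp (-(b - a))
        exact mul_le_mul_of_nonneg_left (by linarith) (exp_pos _).le
    _ ≤ exp (-c) * -(a - b) := by
        rw [neg_sub]; gcongr

lemma abs_div_sub_div_le {a b A B ℓ D : ℝ} (hℓ : 0 < ℓ) (hℓA : ℓ ≤ A) (hb : 0 ≤ b)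
    (hbB : b ≤ B) (hB : 0 < B) (hab : |a - b| ≤ D) (hAB : |A - B| ≤ D) :
    |a / A - b / B| ≤ 2 * D / ℓ := by
  have hA := hℓ.trans_le hℓA
  have hq : |b / B| ≤ 1 := by
    rw [abs_of_nonneg (div_nonneg hb hB.le)]; exact div_le_one_of_le₀ hbB hB.le
  have hnum : |a - b / B * A| ≤ 2 * D := calc
    |a - b / B * A| = |(a - b) + b / B * (B - A)| := by field_simp; ring_nf
    _ ≤ |a - b| + |b / B| * |B - A| := by rw [← abs_mul]; exact abs_add_le _ _
    _ ≤ D + 1 * D := by rw [abs_sub_comm B]; gcongr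
    _ = 2 * D := by ring
  calc |a / A - b / B| = |a - b / B * A| / A := by
        rw [← abs_of_pos hA, ← abs_div, abs_of_pos hA, sub_div, mul_div_cancel_right₀ _ hA.ne']
    _ ≤ 2 * D / ℓ := div_le_div₀ ((abs_nonneg _).trans hnum) hnum hℓ hℓA

lemma rpow_div_two_eq_mul_sqrt {x : ℝ} (hx : 0 < x) (n : ℕ) :
    x ^ ((2 * n + 1 : ℝ) / 2) = x ^ n * √x := by
  rw [sqrt_eq_rpow, ← rpow_natCast, ← rpow_add hx]
  ring_nf

lemma integral_exp_neg_mul_sq_le {α x : ℝ} (hα : 0 < α) (hx : 0 ≤ x) :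
    ∫ w in (0:ℝ)..x, exp (-α * w ^ 2) ≤ √(π / α) / 2 := by
  rw [intervalIntegral.integral_of_le hx, ← integral_gaussian_Ioi]
  exact setIntegral_mono_set (integrable_exp_neg_mul_sq hα).integrableOn
    (Eventually.of_forall fun w => (exp_pos _).le) Ioc_subset_Ioi_self.eventuallyLE

lemma integral_sq_mul_exp_neg_mul_sq_le {α x : ℝ} (hα : 0 < α) (hx : 0 ≤ x) :
    ∫ w in (0:ℝ)..x, w ^ 2 * exp (-α * w ^ 2) ≤ √(π / α) / 2 / (2 * α) := by
  have hg : Continuous fun w : ℝ => exp (-α * w ^ 2) := by fun_prop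
  have hderiv : ∀ w ∈ uIcc 0 x, HasDerivAt (fun w : ℝ => -(w * exp (-α * w ^ 2)) / (2 * α))
      (w ^ 2 * exp (-α * w ^ 2) - exp (-α * w ^ 2) / (2 * α)) w := by
    intro w _
    refine ((((hasDerivAt_id' w).mul
      (((hasDerivAt_pow 2 w).const_mul (-α)).exp)).neg).div_const (2 * α)).congr_deriv ?_
    field_simp
    ring
  have hint₁ : IntervalIntegrable (fun w : ℝ => w ^ 2 * exp (-α * w ^ 2)) volume 0 x :=
    ((continuous_pow 2).mul hg).intervalIntegrable 0 x
  have hint₂ : IntervalIntegrable (fun w : ℝ => exp (-α * w ^ 2) / (2 * α)) volume 0 x :=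
    (hg.div_const _).intervalIntegrable 0 x
  have hFTC := integral_eq_sub_of_hasDerivAt hderiv (hint₁.sub hint₂)
  rw [intervalIntegral.integral_sub hint₁ hint₂, intervalIntegral.integral_div] at hFTC
  have hboundary : 0 ≤ x * exp (-α * x ^ 2) / (2 * α) := by positivity
  have hgauss := div_le_div_of_nonneg_right (integral_exp_neg_mul_sq_le hα hx)
    (by positivity : (0:ℝ) ≤ 2 * α)
  simp only [zero_mul, neg_zero, zero_div, sub_zero, neg_div] at hFTC
  linarith

lemma tendsto_integral_exp_neg_mul_sq {β : ℝ} (hβ : 0 < β) :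
    Tendsto (fun x => ∫ w in (0:ℝ)..x, exp (-β * w ^ 2)) atTop (nhds (√(π / β) / 2)) := by
  rw [← integral_gaussian_Ioi]
  exact intervalIntegral_tendsto_integral_Ioi 0 (integrable_exp_neg_mul_sq hβ).integrableOn
    tendsto_id

lemma integral_two_mul_mul_const (c w : ℝ) : ∫ z in (0:ℝ)..w, 2 * z * c = c * w ^ 2 := by
  rw [intervalIntegral.integral_mul_const, intervalIntegral.integral_const_mul, integral_id]
  ring

lemma integral_two_mul_mem_Icc {f : ℝ → ℝ} {a b w : ℝ} (hw : 0 ≤ w)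
    (hf : ContinuousOn f (Icc 0 w)) (hab : ∀ z ∈ Icc 0 w, f z ∈ Icc a b) :
    ∫ z in (0:ℝ)..w, 2 * z * f z ∈ Icc (a * w ^ 2) (b * w ^ 2) := by
  have hint : IntervalIntegrable (fun z => 2 * z * f z) volume 0 w :=
    ((continuousOn_const.mul continuousOn_id).mul hf).intervalIntegrable_of_Icc hw
  have hlin (c : ℝ) : IntervalIntegrable (fun z : ℝ => 2 * z * c) volume 0 w := by
    apply Continuous.intervalIntegrable; fun_prop
  rw [← integral_two_mul_mul_const a, ← integral_two_mul_mul_const b]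
  exact ⟨integral_mono_on hw (hlin a) hint fun z hz =>
      mul_le_mul_of_nonneg_left (hab z hz).1 (by linarith [hz.1]),
    integral_mono_on hw hint (hlin b) fun z hz =>
      mul_le_mul_of_nonneg_left (hab z hz).2 (by linarith [hz.1])⟩

noncomputable def Kconst (δ γ : ℝ) : ℝ :=
  |δ| / min 1 (1 + δ) ^ 2 * (√(π / (min 1 (1 + γ) / max 1 (1 + δ))) / 2) +
    |δ - γ| / min 1 (1 + δ) ^ 3 *
      (√(π / (min 1 (1 + γ) / max 1 (1 + δ))) / 2 / (2 * (min 1 (1 + γ) / max 1 (1 + δ))))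

noncomputable def lowerLimit (δ γ : ℝ) : ℝ :=
  √(π / (max 1 (1 + γ) / min 1 (1 + δ))) / 2 * (1 / max 1 (1 + δ))

lemma lowerLimit_pos {δ : ℝ} (hδ : -1 < δ) (γ : ℝ) : 0 < lowerLimit δ γ := by
  have := min_one_one_add_pos hδ
  unfold lowerLimit
  positivity

lemma Mconst_mul_lowerLimit {δ γ : ℝ} (hδ : -1 < δ) (hγ : -1 < γ) :
    Mconst δ γ * lowerLimit δ γ = 2 * Kconst δ γ := by
  have hmδ := min_one_one_add_pos hδ
  have hmγ := min_one_one_add_pos hγ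
  have hMδ : 0 < max 1 (1 + δ) := lt_max_of_lt_left one_pos
  have hMγ : 0 < max 1 (1 + γ) := lt_max_of_lt_left one_pos
  have h32 := rpow_div_two_eq_mul_sqrt hMδ 1
  have h12 := rpow_div_two_eq_mul_sqrt hMγ 0
  have h52 := rpow_div_two_eq_mul_sqrt hmδ 2
  have h12' := rpow_div_two_eq_mul_sqrt hmγ 0
  norm_num at h32 h12 h52 h12'
  rw [Mconst, lowerLimit, Kconst, h32, h12, h52, h12', sqrt_div pi_pos.le, sqrt_div pi_pos.le,
    sqrt_div hMγ.le, sqrt_div hmγ.le]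
  have := sqrt_pos.2 hmδ
  have := sqrt_pos.2 hMδ
  have := sqrt_pos.2 hmγ
  have := sqrt_pos.2 hMγ
  field_simp

def Admissible (h : ℝ → ℝ) : Prop :=
  ContinuousOn h (Ici 0) ∧ MapsTo h (Ici 0) (Icc 0 1)

noncomputable def Aint (δ γ : ℝ) (h : ℝ → ℝ) (w : ℝ) : ℝ :=
  ∫ z in (0:ℝ)..w, 2*z*(1+γ*h z)/(1+δ*h z)

noncomputable def Fintegrand (δ γ : ℝ) (h : ℝ → ℝ) (w : ℝ) : ℝ :=
  exp (-Aint δ γ h w) * (1 / (1 + δ * h w))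

lemma Fint_eq_integral_Fintegrand (δ γ : ℝ) (h : ℝ → ℝ) (x : ℝ) :
    Fint δ γ h x = ∫ w in (0:ℝ)..x, Fintegrand δ γ h w := rfl

lemma Aint_eq_integral_weight (δ γ : ℝ) (h : ℝ → ℝ) (w : ℝ) :
    Aint δ γ h w = ∫ z in (0:ℝ)..w, 2 * z * weight δ γ (h z) := by
  simp only [Aint, weight, mul_div_assoc]

namespace Admissible

variable {δ γ ε : ℝ} {h h₁ h₂ : ℝ → ℝ}

lemma continuousOn_weight (hδ : -1 < δ) (hh : Admissible h) :
    ContinuousOn (fun z => weight δ γ (h z)) (Ici 0) :=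
  (continuousOn_const.add (continuousOn_const.mul hh.1)).div
    (continuousOn_const.add (continuousOn_const.mul hh.1))
    fun _ hz => (one_add_mul_pos hδ (hh.2 hz)).ne'

lemma continuousOn_two_mul_weight (hδ : -1 < δ) (hh : Admissible h) :
    ContinuousOn (fun z => 2 * z * weight δ γ (h z)) (Ici 0) :=
  (continuousOn_const.mul continuousOn_id).mul (hh.continuousOn_weight hδ)

lemma continuousOn_Aint (hδ : -1 < δ) (hh : Admissible h) {x : ℝ} (hx : 0 ≤ x) :
    ContinuousOn (Aint δ γ h) (Icc 0 x) := by
  have hint : IntervalIntegrable (fun z => 2 * z * weight δ γ (h z)) volume 0 x :=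
    ((hh.continuousOn_two_mul_weight hδ).mono Icc_subset_Ici_self).intervalIntegrable_of_Icc hx
  simpa only [uIcc_of_le hx, ← Aint_eq_integral_weight] using
    continuousOn_primitive_interval' hint left_mem_uIcc

lemma Aint_mem_Icc (hδ : -1 < δ) (hγ : -1 < γ) (hh : Admissible h) {w : ℝ} (hw : 0 ≤ w) :
    Aint δ γ h w ∈ Icc (min 1 (1 + γ) / max 1 (1 + δ) * w ^ 2)
      (max 1 (1 + γ) / min 1 (1 + δ) * w ^ 2) := by
  rw [Aint_eq_integral_weight]
  exact integral_two_mul_mem_Icc hw ((hh.continuousOn_weight hδ).mono Icc_subset_Ici_self)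
    fun z hz => weight_mem_Icc hδ hγ (hh.2 hz.1)

lemma abs_Aint_sub_le (hδ : -1 < δ) (hh₁ : Admissible h₁) (hh₂ : Admissible h₂)
    (hε : ∀ z ≥ 0, |h₁ z - h₂ z| ≤ ε) {w : ℝ} (hw : 0 ≤ w) :
    |Aint δ γ h₁ w - Aint δ γ h₂ w| ≤ |δ - γ| * ε / min 1 (1 + δ) ^ 2 * w ^ 2 := by
  have hint (h : ℝ → ℝ) (hh : Admissible h) :
      IntervalIntegrable (fun z => 2 * z * weight δ γ (h z)) volume 0 w :=
    ((hh.continuousOn_two_mul_weight hδ).mono Icc_subset_Ici_self).intervalIntegrable_of_Icc hw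
  have hbound := integral_two_mul_mem_Icc (f := fun z => weight δ γ (h₁ z) - weight δ γ (h₂ z))
    (a := -(|δ - γ| * ε / min 1 (1 + δ) ^ 2)) (b := |δ - γ| * ε / min 1 (1 + δ) ^ 2) hw
    (((hh₁.continuousOn_weight hδ).sub (hh₂.continuousOn_weight hδ)).mono Icc_subset_Ici_self)
    fun z hz => abs_le.1 <| (abs_weight_sub_le (γ := γ) hδ (hh₁.2 hz.1) (hh₂.2 hz.1)).trans
      (by gcongr; exact hε z hz.1)
  rw [neg_mul] at hbound
  rw [Aint_eq_integral_weight, Aint_eq_integral_weight,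
    ← intervalIntegral.integral_sub (hint h₁ hh₁) (hint h₂ hh₂)]
  simpa only [mul_sub] using abs_le.2 hbound

lemma Fintegrand_pos (hδ : -1 < δ) (hh : Admissible h) {w : ℝ} (hw : 0 ≤ w) :
    0 < Fintegrand δ γ h w :=
  mul_pos (exp_pos _) (one_div_pos.2 (one_add_mul_pos hδ (hh.2 hw)))

lemma intervalIntegrable_Fintegrand (hδ : -1 < δ) (hh : Admissible h) {x y : ℝ}
    (hx : 0 ≤ x) (hy : 0 ≤ y) : IntervalIntegrable (Fintegrand δ γ h) volume x y := by
  have hR := hx.trans (le_max_left x y)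
  have hcont : ContinuousOn (Fintegrand δ γ h) (Icc 0 (max x y)) :=
    (continuous_exp.comp_continuousOn (hh.continuousOn_Aint hδ hR).neg).mul
      (continuousOn_const.div (continuousOn_const.add (continuousOn_const.mul
        (hh.1.mono Icc_subset_Ici_self))) fun _ hz => (one_add_mul_pos hδ (hh.2 hz.1)).ne')
  exact ContinuousOn.intervalIntegrable
    (hcont.mono (uIcc_subset_Icc ⟨hx, le_max_left x y⟩ ⟨hy, le_max_right x y⟩))

lemma exp_mul_le_Fintegrand (hδ : -1 < δ) (hγ : -1 < γ) (hh : Admissible h) {w : ℝ}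
    (hw : 0 ≤ w) :
    exp (-(max 1 (1 + γ) / min 1 (1 + δ)) * w ^ 2) * (1 / max 1 (1 + δ)) ≤
      Fintegrand δ γ h w := by
  have hd := one_add_mul_mem_Icc δ (hh.2 hw)
  rw [Fintegrand, neg_mul]
  gcongr
  · exact (hh.Aint_mem_Icc hδ hγ hw).2
  · exact one_add_mul_pos hδ (hh.2 hw)
  · exact hd.2

lemma abs_Fintegrand_sub_le (hδ : -1 < δ) (hγ : -1 < γ) (hh₁ : Admissible h₁)
    (hh₂ : Admissible h₂) (hε : ∀ z ≥ 0, |h₁ z - h₂ z| ≤ ε) {w : ℝ} (hw : 0 ≤ w) :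
    |Fintegrand δ γ h₁ w - Fintegrand δ γ h₂ w| ≤
      ε * (|δ| / min 1 (1 + δ) ^ 2 * exp (-(min 1 (1 + γ) / max 1 (1 + δ)) * w ^ 2) +
        |δ - γ| / min 1 (1 + δ) ^ 3 *
          (w ^ 2 * exp (-(min 1 (1 + γ) / max 1 (1 + δ)) * w ^ 2))) := by
  set α := min 1 (1 + γ) / max 1 (1 + δ)
  set m := min 1 (1 + δ)
  have hm : 0 < m := min_one_one_add_pos hδ
  have hA₁ := (hh₁.Aint_mem_Icc hδ hγ hw).1
  have hA₂ := (hh₂.Aint_mem_Icc hδ hγ hw).1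
  have hd₂ := one_add_mul_mem_Icc δ (hh₂.2 hw)
  have hd₂pos := one_add_mul_pos hδ (hh₂.2 hw)
  have hexp : exp (-Aint δ γ h₁ w) ≤ exp (-α * w ^ 2) := by
    rw [neg_mul]; exact exp_le_exp.2 (neg_le_neg hA₁)
  have hdens : |1 / (1 + δ * h₁ w) - 1 / (1 + δ * h₂ w)| ≤ |δ| * ε / m ^ 2 :=
    (abs_one_div_one_add_mul_sub_le hδ (hh₁.2 hw) (hh₂.2 hw)).trans (by gcongr; exact hε w hw)
  have hAexp : |exp (-Aint δ γ h₁ w) - exp (-Aint δ γ h₂ w)| ≤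
      exp (-α * w ^ 2) * (|δ - γ| * ε / m ^ 2 * w ^ 2) := by
    rw [neg_mul]
    exact (abs_exp_neg_sub_exp_neg_le hA₁ hA₂).trans
      (mul_le_mul_of_nonneg_left (hh₁.abs_Aint_sub_le hδ hh₂ hε hw) (exp_pos _).le)
  have hinv : |1 / (1 + δ * h₂ w)| ≤ 1 / m := by
    rw [abs_of_pos (one_div_pos.2 hd₂pos)]; exact one_div_le_one_div_of_le hm hd₂.1
  calc |Fintegrand δ γ h₁ w - Fintegrand δ γ h₂ w|
      = |exp (-Aint δ γ h₁ w) * (1 / (1 + δ * h₁ w) - 1 / (1 + δ * h₂ w)) +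
          (exp (-Aint δ γ h₁ w) - exp (-Aint δ γ h₂ w)) * (1 / (1 + δ * h₂ w))| := by
        rw [Fintegrand, Fintegrand]; ring_nf
    _ ≤ exp (-α * w ^ 2) * (|δ| * ε / m ^ 2) +
          exp (-α * w ^ 2) * (|δ - γ| * ε / m ^ 2 * w ^ 2) * (1 / m) := by
        refine (abs_add_le _ _).trans (add_le_add ?_ ?_) <;> rw [abs_mul]
        · rw [abs_of_pos (exp_pos _)]; exact mul_le_mul hexp hdens (abs_nonneg _) (exp_pos _).le
        · exact mul_le_mul hAexp hinv (abs_nonneg _) ((abs_nonneg _).trans hAexp)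
    _ = _ := by field_simp

lemma Fint_nonneg (hδ : -1 < δ) (hh : Admissible h) {x : ℝ} (hx : 0 ≤ x) :
    0 ≤ Fint δ γ h x :=
  intervalIntegral.integral_nonneg hx fun _ hw => (hh.Fintegrand_pos hδ hw.1).le

lemma Fint_le_of_tendsto (hδ : -1 < δ) (hh : Admissible h) {L : ℝ}
    (hL : Tendsto (Fint δ γ h) atTop (nhds L)) {x : ℝ} (hx : 0 ≤ x) : Fint δ γ h x ≤ L := by
  refine ge_of_tendsto hL ?_
  filter_upwards [eventually_ge_atTop x] with y hxy
  have hy := hx.trans hxy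
  rw [← sub_nonneg, Fint_eq_integral_Fintegrand, Fint_eq_integral_Fintegrand,
    integral_interval_sub_left (hh.intervalIntegrable_Fintegrand hδ le_rfl hy)
      (hh.intervalIntegrable_Fintegrand hδ le_rfl hx)]
  exact intervalIntegral.integral_nonneg hxy fun w hw => (hh.Fintegrand_pos hδ (hx.trans hw.1)).le

lemma abs_Fint_sub_le (hδ : -1 < δ) (hγ : -1 < γ) (hh₁ : Admissible h₁)
    (hh₂ : Admissible h₂) (hε : ∀ z ≥ 0, |h₁ z - h₂ z| ≤ ε) {x : ℝ} (hx : 0 ≤ x) :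
    |Fint δ γ h₁ x - Fint δ γ h₂ x| ≤ ε * Kconst δ γ := by
  set α := min 1 (1 + γ) / max 1 (1 + δ)
  have hα : 0 < α := div_pos (min_one_one_add_pos hγ) (lt_max_of_lt_left one_pos)
  have hε0 : 0 ≤ ε := (abs_nonneg _).trans (hε 0 le_rfl)
  have hg : Continuous fun w : ℝ => exp (-α * w ^ 2) := by fun_prop
  have hI₀ : IntervalIntegrable (fun w : ℝ => exp (-α * w ^ 2)) volume 0 x :=
    hg.intervalIntegrable 0 x
  have hI₂ : IntervalIntegrable (fun w : ℝ => w ^ 2 * exp (-α * w ^ 2)) volume 0 x :=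
    ((continuous_pow 2).mul hg).intervalIntegrable 0 x
  have hF₁ := hh₁.intervalIntegrable_Fintegrand (γ := γ) hδ le_rfl hx
  have hF₂ := hh₂.intervalIntegrable_Fintegrand (γ := γ) hδ le_rfl hx
  rw [Fint_eq_integral_Fintegrand, Fint_eq_integral_Fintegrand,
    ← intervalIntegral.integral_sub hF₁ hF₂]
  calc |∫ w in (0:ℝ)..x, (Fintegrand δ γ h₁ w - Fintegrand δ γ h₂ w)|
      ≤ ∫ w in (0:ℝ)..x, |Fintegrand δ γ h₁ w - Fintegrand δ γ h₂ w| :=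
        abs_integral_le_integral_abs hx
    _ ≤ ∫ w in (0:ℝ)..x, ε * (|δ| / min 1 (1 + δ) ^ 2 * exp (-α * w ^ 2) +
          |δ - γ| / min 1 (1 + δ) ^ 3 * (w ^ 2 * exp (-α * w ^ 2))) :=
        integral_mono_on hx (hF₁.sub hF₂).abs
          (((hI₀.const_mul _).add (hI₂.const_mul _)).const_mul _)
          fun w hw => hh₁.abs_Fintegrand_sub_le hδ hγ hh₂ hε hw.1
    _ = ε * (|δ| / min 1 (1 + δ) ^ 2 * ∫ w in (0:ℝ)..x, exp (-α * w ^ 2)) +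
          ε * (|δ - γ| / min 1 (1 + δ) ^ 3 * ∫ w in (0:ℝ)..x, w ^ 2 * exp (-α * w ^ 2)) := by
        rw [intervalIntegral.integral_const_mul, intervalIntegral.integral_add
          (hI₀.const_mul _) (hI₂.const_mul _), intervalIntegral.integral_const_mul,
          intervalIntegral.integral_const_mul, mul_add]
    _ ≤ ε * Kconst δ γ := by
        rw [Kconst, mul_add]
        gcongr
        exacts [integral_exp_neg_mul_sq_le hα hx,
          div_nonneg (abs_nonneg _) (pow_nonneg (min_one_one_add_pos hδ).le 3),
          integral_sq_mul_exp_neg_mul_sq_le hα hx]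

lemma abs_sub_le_of_tendsto_Fint (hδ : -1 < δ) (hγ : -1 < γ) (hh₁ : Admissible h₁)
    (hh₂ : Admissible h₂) (hε : ∀ z ≥ 0, |h₁ z - h₂ z| ≤ ε) {L₁ L₂ : ℝ}
    (hL₁ : Tendsto (Fint δ γ h₁) atTop (nhds L₁)) (hL₂ : Tendsto (Fint δ γ h₂) atTop (nhds L₂)) :
    |L₁ - L₂| ≤ ε * Kconst δ γ :=
  le_of_tendsto (hL₁.sub hL₂).abs <| (eventually_ge_atTop 0).mono fun _ hx =>
    hh₁.abs_Fint_sub_le hδ hγ hh₂ hε hx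

lemma lowerLimit_le_of_tendsto (hδ : -1 < δ) (hγ : -1 < γ) (hh : Admissible h) {L : ℝ}
    (hL : Tendsto (Fint δ γ h) atTop (nhds L)) : lowerLimit δ γ ≤ L := by
  set β := max 1 (1 + γ) / min 1 (1 + δ)
  have hβ : 0 < β := div_pos (lt_max_of_lt_left one_pos) (min_one_one_add_pos hδ)
  have hg : Continuous fun w : ℝ => exp (-β * w ^ 2) * (1 / max 1 (1 + δ)) := by fun_prop
  have hlim := (tendsto_integral_exp_neg_mul_sq hβ).mul_const (1 / max 1 (1 + δ))
  simp only [← intervalIntegral.integral_mul_const] at hlim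
  refine le_of_tendsto_of_tendsto hlim hL <| (eventually_ge_atTop 0).mono fun x hx => ?_
  exact integral_mono_on hx (hg.intervalIntegrable 0 x)
    (hh.intervalIntegrable_Fintegrand hδ le_rfl hx) fun w hw =>
      hh.exp_mul_le_Fintegrand hδ hγ hw.1

lemma abs_sub_le_iSup (hh₁ : Admissible h₁) (hh₂ : Admissible h₂) {z : ℝ} (hz : 0 ≤ z) :
    |h₁ z - h₂ z| ≤ ⨆ t : Ici (0:ℝ), |h₁ t - h₂ t| :=
  le_ciSup (f := fun t : Ici (0:ℝ) => |h₁ t - h₂ t|) ⟨1, by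
    rintro _ ⟨t, rfl⟩
    exact abs_sub_le_of_nonneg_of_le (hh₁.2 t.2).1 (hh₁.2 t.2).2 (hh₂.2 t.2).1 (hh₂.2 t.2).2⟩
    ⟨z, hz⟩

end Admissible

theorem T_contraction_estimate (δ γ : ℝ) (hδ : -1 < δ) (hγ : -1 < γ)
    (h₁ h₂ : ℝ → ℝ)
    (hcont₁ : ContinuousOn h₁ (Set.Ici 0)) (hcont₂ : ContinuousOn h₂ (Set.Ici 0))
    (hb₁ : ∀ x ≥ (0:ℝ), 0 ≤ h₁ x ∧ h₁ x ≤ 1)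
    (hb₂ : ∀ x ≥ (0:ℝ), 0 ≤ h₂ x ∧ h₂ x ≤ 1)
    (L₁ L₂ : ℝ) (hL₁ : Tendsto (Fint δ γ h₁) atTop (nhds L₁))
    (hL₂ : Tendsto (Fint δ γ h₂) atTop (nhds L₂)) :
    (⨆ t : Set.Ici (0:ℝ), |Fint δ γ h₁ t / L₁ - Fint δ γ h₂ t / L₂|) ≤
      Mconst δ γ * ⨆ t : Set.Ici (0:ℝ), |h₁ t - h₂ t| := by
  have hh₁ : Admissible h₁ := ⟨hcont₁, fun x hx => hb₁ x hx⟩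
  have hh₂ : Admissible h₂ := ⟨hcont₂, fun x hx => hb₂ x hx⟩
  set ε := ⨆ t : Set.Ici (0:ℝ), |h₁ t - h₂ t|
  have hε : ∀ z ≥ 0, |h₁ z - h₂ z| ≤ ε := fun z hz => hh₁.abs_sub_le_iSup hh₂ hz
  have hℓ := lowerLimit_pos hδ γ
  have hℓL₁ := hh₁.lowerLimit_le_of_tendsto hδ hγ hL₁
  have hℓL₂ := hh₂.lowerLimit_le_of_tendsto hδ hγ hL₂
  refine ciSup_le fun ⟨x, hx⟩ => ?_
  calc |Fint δ γ h₁ x / L₁ - Fint δ γ h₂ x / L₂|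
      ≤ 2 * (ε * Kconst δ γ) / lowerLimit δ γ :=
        abs_div_sub_div_le hℓ hℓL₁ (hh₂.Fint_nonneg hδ hx) (hh₂.Fint_le_of_tendsto hδ hL₂ hx)
          (hℓ.trans_le hℓL₂) (hh₁.abs_Fint_sub_le hδ hγ hh₂ hε hx)
          (hh₁.abs_sub_le_of_tendsto_Fint hδ hγ hh₂ hε hL₁ hL₂)
    _ = Mconst δ γ * ε := by
        rw [eq_comm, eq_div_iff hℓ.ne', mul_right_comm, Mconst_mul_lowerLimit hδ hγ]; ring
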